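/- arXiv:1706.04150 — 3 statements merged into one kernel-verified Lean document; each statement's English description precedes it below -/
import Mathlib

section
/- Let P(λ) = ∑_{i=0}^{k} A_i λ^i be a regular n×n complex matrix polynomial of odd degree k ≥ 3 and let δ ∈ ℂ be a finite eigenvalue of P (i.e. det P(δ) = 0). Then: (i) a vector z ∈ ℂ^{kn} is a right eigenvector of 𝒯_P associated with δ (i.e. z ≠ 0 and 𝒯_P(δ)z = 0) if and only if z = Δ(δ)x for some right eigenvector x of P associated with δ; (ii) z ∈ ℂ^{kn} is a left eigenvector of 𝒯_P associated with δ (i.e. z ≠ 0 and z*𝒯_P(δ) = 0) if and only if z = (Δᴮ(δ))* y for some left eigenvector y of P associated with δ. -/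
open Finset Matrix

noncomputable section
namespace MPoly

abbrev Mat (n : ℕ) := Matrix (Fin n) (Fin n) ℂ

variable {n : ℕ}

/-- Euclidean norm of a complex vector. -/
def vecNorm {ι : Type*} [Fintype ι] (x : ι → ℂ) : ℝ :=
  Real.sqrt (∑ i, ‖x i‖ ^ 2)

/-- Spectral norm (operator norm induced by the Euclidean vector norm). -/
def specNorm {ι κ : Type*} [Fintype ι] [Fintype κ] [DecidableEq κ] (M : Matrix ι κ ℂ) : ℝ :=
  ‖LinearMap.toContinuousLinearMap (Matrix.toEuclideanLin M)‖

/-- Evaluation of the matrix polynomial `P(λ) = ∑_{i=0}^k A_i λ^i`. -/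
def Peval (k : ℕ) (A : ℕ → Mat n) (lam : ℂ) : Mat n :=
  ∑ i ∈ Finset.range (k + 1), lam ^ i • A i

/-- Derivative `P′(λ) = ∑_{i=1}^k i A_i λ^{i-1}`. -/
def Pderiv (k : ℕ) (A : ℕ → Mat n) (lam : ℂ) : Mat n :=
  ∑ i ∈ Finset.range k, (((i : ℂ) + 1) * lam ^ i) • A (i + 1)

/-- `i`-th Horner shift `P_i(λ) = ∑_{j=0}^i λ^j A_{k-i+j}`. -/
def horner (k : ℕ) (A : ℕ → Mat n) (i : ℕ) (lam : ℂ) : Mat n :=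
  ∑ j ∈ Finset.range (i + 1), lam ^ j • A (k - i + j)

/-- `P^i(λ) = ∑_{j=0}^i λ^j A_j`. -/
def lowPart (A : ℕ → Mat n) (i : ℕ) (lam : ℂ) : Mat n :=
  ∑ j ∈ Finset.range (i + 1), lam ^ j • A j

/-- `q`-th (0-indexed) block of `Δ(λ)`. -/
def DeltaBlock (k : ℕ) (A : ℕ → Mat n) (lam : ℂ) (q : ℕ) : Mat n :=
  if q % 2 = 0 then lam ^ ((k - 1 - q) / 2) • (1 : Mat n)
  else lam ^ ((k - q) / 2) • horner k A q lam

/-- The kn×n matrix `Δ(λ)`. -/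
def Delta (k : ℕ) (A : ℕ → Mat n) (lam : ℂ) : Matrix (Fin k × Fin n) (Fin n) ℂ :=
  Matrix.of fun p b => DeltaBlock k A lam p.1.1 p.2 b

/-- The n×kn block-transpose `Δᴮ(λ)`. -/
def DeltaB (k : ℕ) (A : ℕ → Mat n) (lam : ℂ) : Matrix (Fin n) (Fin k × Fin n) ℂ :=
  Matrix.of fun a q => DeltaBlock k A lam q.1.1 a q.2

/-- (0-indexed) blocks of `𝒯₁`. -/
def T1Block (k : ℕ) (A : ℕ → Mat n) (i j : ℕ) : Mat n :=
  if i = j then (if i % 2 = 0 then A (k - i) else 0)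
  else if (j = i + 1 ∧ i % 2 = 1) ∨ (i = j + 1 ∧ j % 2 = 1) then 1 else 0

/-- (0-indexed) blocks of `𝒯₀`. -/
def T0Block (k : ℕ) (A : ℕ → Mat n) (i j : ℕ) : Mat n :=
  if i = j then (if i % 2 = 0 then -(A (k - i - 1)) else 0)
  else if (j = i + 1 ∧ i % 2 = 0) ∨ (i = j + 1 ∧ j % 2 = 0) then 1 else 0

/-- `𝒯₁`. -/
def TT1 (k : ℕ) (A : ℕ → Mat n) : Matrix (Fin k × Fin n) (Fin k × Fin n) ℂ :=
  Matrix.of fun p q => T1Block k A p.1.1 q.1.1 p.2 q.2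

/-- `𝒯₀`. -/
def TT0 (k : ℕ) (A : ℕ → Mat n) : Matrix (Fin k × Fin n) (Fin k × Fin n) ℂ :=
  Matrix.of fun p q => T0Block k A p.1.1 q.1.1 p.2 q.2

/-- The pencil `𝒯_P(λ) = λ𝒯₁ - 𝒯₀`. -/
def Tpencil (k : ℕ) (A : ℕ → Mat n) (lam : ℂ) : Matrix (Fin k × Fin n) (Fin k × Fin n) ℂ :=
  lam • TT1 k A - TT0 k A

/-- Block anti-diagonal flip matrix `R`. -/
def Rmat (k n : ℕ) : Matrix (Fin k × Fin n) (Fin k × Fin n) ℂ :=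
  Matrix.of fun p q => if p.1.1 + q.1.1 = k - 1 ∧ p.2 = q.2 then 1 else 0

/-- Block-diagonal sign matrix `S` (block `i` (1-indexed) is `-I` iff `i ≡ 0,1 mod 4`). -/
def Smat (k n : ℕ) : Matrix (Fin k × Fin n) (Fin k × Fin n) ℂ :=
  Matrix.of fun p q =>
    if p = q then (if (p.1.1 + 1) % 4 = 0 ∨ (p.1.1 + 1) % 4 = 1 then -1 else 1) else 0

/-- `D = diag(I, -I, I, …, I)`. -/
def Dmat (k n : ℕ) : Matrix (Fin k × Fin n) (Fin k × Fin n) ℂ :=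
  Matrix.of fun p q => if p = q then ((-1 : ℂ)) ^ p.1.1 else 0

/-- `e_k ⊗ I_n`: kn×n matrix with last block `I_n`. -/
def ekI (k n : ℕ) : Matrix (Fin k × Fin n) (Fin n) ℂ :=
  Matrix.of fun p b => if p.1.1 = k - 1 ∧ p.2 = b then 1 else 0

/-- The pencil `ℛ_P(λ) = S R 𝒯_P(λ) R S`. -/
def Rpencil (k : ℕ) (A : ℕ → Mat n) (lam : ℂ) : Matrix (Fin k × Fin n) (Fin k × Fin n) ℂ :=
  Smat k n * Rmat k n * Tpencil k A lam * Rmat k n * Smat k n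

/-- `max_{i=0:k} ‖A_i‖₂`. -/
def maxA (k : ℕ) (A : ℕ → Mat n) : ℝ :=
  (Finset.range (k + 1)).sup' Finset.nonempty_range_add_one fun i => specNorm (A i)

/-- `max_{i=0:k} max{1, ‖A_i‖₂}`. -/
def maxA1 (k : ℕ) (A : ℕ → Mat n) : ℝ :=
  (Finset.range (k + 1)).sup' Finset.nonempty_range_add_one fun i => max 1 (specNorm (A i))

/-- The quantity `d₁(δ)`. -/
def d1 (k : ℕ) (δ : ℂ) : ℝ :=
  ∑ r ∈ Finset.range ((k - 1) / 2 + 1), ‖δ‖ ^ (2 * r)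
    + ∑ r ∈ Finset.Icc 1 ((k - 1) / 2),
        ((k : ℝ) - 2 * r + 1) * ∑ s ∈ Finset.Icc r (k - r), ‖δ‖ ^ (2 * s)

/-- `ρ₁`. -/
def rho1 (k : ℕ) (A : ℕ → Mat n) : ℝ :=
  ((Finset.range (k + 1)).sup' Finset.nonempty_range_add_one fun i => max 1 (specNorm (A i) ^ 3))
    / min (specNorm (A k)) (specNorm (A 0))

/-- `ρ₂`. -/
def rho2 (k : ℕ) (A : ℕ → Mat n) : ℝ :=
  min (max 1 (specNorm (A k))) (max 1 (specNorm (A 0))) / maxA k A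

/-- `ρ′`. -/
def rho' (k : ℕ) (A : ℕ → Mat n) : ℝ :=
  ((Finset.range (k + 1)).sup' Finset.nonempty_range_add_one fun i => max 1 (specNorm (A i) ^ 2))
    / min (specNorm (A k)) (specNorm (A 0))

/-- `det P(λ)` as a polynomial in `λ`. -/
def detPoly (k : ℕ) (A : ℕ → Mat n) : Polynomial ℂ :=
  (∑ i ∈ Finset.range (k + 1), (Polynomial.X : Polynomial ℂ) ^ i • (A i).map Polynomial.C).det

/-- `L₁¹` (leading coefficient of `D₁(λ,P)`). -/
def D1L1 (k : ℕ) (A : ℕ → Mat n) : Matrix (Fin k × Fin n) (Fin k × Fin n) ℂ :=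
  Matrix.of fun p q =>
    (if p.1.1 = 0 ∧ q.1.1 = 0 then A k
     else if 1 ≤ p.1.1 ∧ 1 ≤ q.1.1 ∧ p.1.1 + q.1.1 ≤ k then -(A (k - p.1.1 - q.1.1))
     else 0) p.2 q.2

/-- `L₀¹` (trailing coefficient of `D₁(λ,P)`). -/
def D1L0 (k : ℕ) (A : ℕ → Mat n) : Matrix (Fin k × Fin n) (Fin k × Fin n) ℂ :=
  Matrix.of fun p q =>
    (if p.1.1 + q.1.1 + 1 ≤ k then -(A (k - 1 - p.1.1 - q.1.1)) else 0) p.2 q.2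

/-- `L₁ᵏ` (leading coefficient of `D_k(λ,P)`). -/
def DkL1 (k : ℕ) (A : ℕ → Mat n) : Matrix (Fin k × Fin n) (Fin k × Fin n) ℂ :=
  Matrix.of fun p q =>
    (if k - 1 ≤ p.1.1 + q.1.1 then A (2 * k - 1 - p.1.1 - q.1.1) else 0) p.2 q.2

/-- `L₀ᵏ` (trailing coefficient of `D_k(λ,P)`). -/
def DkL0 (k : ℕ) (A : ℕ → Mat n) : Matrix (Fin k × Fin n) (Fin k × Fin n) ℂ :=
  Matrix.of fun p q =>
    (if p.1.1 = k - 1 ∧ q.1.1 = k - 1 then -(A 0)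
     else if p.1.1 ≤ k - 2 ∧ q.1.1 ≤ k - 2 ∧ k - 2 ≤ p.1.1 + q.1.1
       then A (2 * k - 2 - p.1.1 - q.1.1)
     else 0) p.2 q.2

/-- `X₁` (leading coefficient of the first companion form `C₁(λ)`). -/
def C1X (k : ℕ) (A : ℕ → Mat n) : Matrix (Fin k × Fin n) (Fin k × Fin n) ℂ :=
  Matrix.of fun p q =>
    (if p.1 = q.1 then (if p.1.1 = 0 then A k else (1 : Mat n)) else 0) p.2 q.2

/-- `Y₁` (trailing coefficient of the first companion form `C₁(λ)`). -/
def C1Y (k : ℕ) (A : ℕ → Mat n) : Matrix (Fin k × Fin n) (Fin k × Fin n) ℂ :=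
  Matrix.of fun p q =>
    (if p.1.1 = 0 then -(A (k - 1 - q.1.1))
     else if p.1.1 = q.1.1 + 1 then (1 : Mat n) else 0) p.2 q.2


/-!
Every block row of `𝒯_P(δ) Δ(δ)` vanishes except the last, which is `P(δ)`: this is the
Horner recursion `P_{i+1}(λ) = λ P_i(λ) + A_{k-i-1}`, i.e. `𝒯_P(δ) Δ(δ) = e_k ⊗ P(δ)`. Since the
last block of `Δ(δ)` is `I_n`, `x ↦ Δ(δ) x` maps right eigenvectors of `P` injectively to right
eigenvectors of `𝒯_P`. Conversely, a vector in the kernel of the first `k - 1` block rows of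
`𝒯_P(δ)` is determined by its last block, so every `z ∈ ker 𝒯_P(δ)` equals `Δ(δ) x` with `x` its
last block, and the last block row then says `P(δ) x = 0`. Left eigenvectors are right eigenvectors
for the transposed coefficients `A_iᵀ`, because `𝒯_P(δ)ᵀ = 𝒯_{Pᵀ}(δ)` and `Δᴮ_P(δ) = Δ_{Pᵀ}(δ)ᵀ`.
-/

theorem sum_range_eq_sum_of_support {M : Type*} [AddCommMonoid M] {f : ℕ → M} {k : ℕ}
    (s : Finset ℕ) (hk : ∀ j, k ≤ j → f j = 0) (hs : ∀ j < k, j ∉ s → f j = 0) :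
    ∑ j ∈ range k, f j = ∑ j ∈ s, f j :=
  calc ∑ j ∈ range k, f j = ∑ j ∈ range k ∪ s, f j :=
        sum_subset subset_union_left fun j _ hj => hk j (by simpa using hj)
    _ = ∑ j ∈ s, f j :=
        (sum_subset subset_union_right fun j hj hjs =>
          hs j (by simpa [hjs] using hj) hjs).symm

section

variable {k : ℕ}

/-- Blocks are indexed by `ℕ` and vanish past the last one, so that the first and last block rows
of the tridiagonal pencil need no separate treatment. -/
def block (z : Fin k × Fin n → ℂ) (j : ℕ) : Fin n → ℂ :=
  fun b => if h : j < k then z (⟨j, h⟩, b) else 0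

lemma block_of_le (z : Fin k × Fin n → ℂ) {j : ℕ} (hj : k ≤ j) : block z j = 0 := by
  funext b
  simp [block, hj.not_gt]

lemma block_sub (z z' : Fin k × Fin n → ℂ) (j : ℕ) :
    block (z - z') j = block z j - block z' j := by
  funext b
  by_cases hj : j < k <;> simp [block, hj]

lemma block_zero (j : ℕ) : block (0 : Fin k × Fin n → ℂ) j = 0 := by
  funext b
  simp [block]

lemma eq_zero_of_block {z : Fin k × Fin n → ℂ} (h : ∀ j < k, block z j = 0) : z = 0 := by
  funext ⟨j, b⟩
  simpa [block] using congrFun (h j j.2) b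

lemma block_mulVec_eq_sum (B : ℕ → ℕ → Mat n) (z : Fin k × Fin n → ℂ) {i : ℕ} (hi : i < k) :
    block ((Matrix.of fun p q : Fin k × Fin n => B p.1 q.1 p.2 q.2) *ᵥ z) i
      = ∑ j ∈ range k, B i j *ᵥ block z j := by
  funext a
  simp [block, hi, mulVec, dotProduct, Fintype.sum_prod_type, Finset.sum_apply,
    ← Fin.sum_univ_eq_sum_range]

def pencilBlock (k : ℕ) (A : ℕ → Mat n) (δ : ℂ) (i j : ℕ) : Mat n :=
  δ • T1Block k A i j - T0Block k A i j

variable (A : ℕ → Mat n) (δ : ℂ)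

lemma Tpencil_eq_of_pencilBlock :
    Tpencil k A δ = Matrix.of fun p q => pencilBlock k A δ p.1 q.1 p.2 q.2 :=
  rfl

lemma block_Tpencil_mulVec (z : Fin k × Fin n → ℂ) {i : ℕ} (hi : i < k) :
    block (Tpencil k A δ *ᵥ z) i = ∑ j ∈ range k, pencilBlock k A δ i j *ᵥ block z j := by
  rw [Tpencil_eq_of_pencilBlock]
  exact block_mulVec_eq_sum _ z hi

lemma pencilBlock_of_not_adjacent {i j : ℕ} (h₀ : j ≠ i) (h₁ : j ≠ i + 1) (h₂ : i ≠ j + 1) :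
    pencilBlock k A δ i j = 0 := by
  simp [pencilBlock, T1Block, T0Block, h₁, h₂, Ne.symm h₀]

lemma pencilBlock_self (i : ℕ) :
    pencilBlock k A δ i i = if i % 2 = 0 then δ • A (k - i) + A (k - i - 1) else 0 := by
  split_ifs with h <;> simp [pencilBlock, T1Block, T0Block, h]

lemma pencilBlock_succ_right (i : ℕ) :
    pencilBlock k A δ i (i + 1) = if i % 2 = 1 then δ • 1 else -1 := by
  have : i ≠ i + 1 + 1 := by omega
  rcases Nat.mod_two_eq_zero_or_one i with h | h <;> simp [pencilBlock, T1Block, T0Block, h, this]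

lemma pencilBlock_succ_left (j : ℕ) :
    pencilBlock k A δ (j + 1) j = if j % 2 = 1 then δ • 1 else -1 := by
  have : j ≠ j + 1 + 1 := by omega
  rcases Nat.mod_two_eq_zero_or_one j with h | h <;> simp [pencilBlock, T1Block, T0Block, h, this]

lemma block_Tpencil_mulVec_zero (z : Fin k × Fin n → ℂ) (hk : 0 < k) :
    block (Tpencil k A δ *ᵥ z) 0 = (δ • A k + A (k - 1)) *ᵥ block z 0 - block z 1 := by
  rw [block_Tpencil_mulVec A δ z hk, sum_range_eq_sum_of_support {0, 1}]
  · simp [pencilBlock_self, pencilBlock_succ_right, neg_mulVec, sub_eq_add_neg]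
  · intro j hj
    rw [block_of_le z hj, mulVec_zero]
  · intro j _ hj
    simp only [mem_insert, mem_singleton, not_or] at hj
    rw [pencilBlock_of_not_adjacent A δ hj.1 (by omega) (by omega), zero_mulVec]

lemma block_Tpencil_mulVec_succ (z : Fin k × Fin n → ℂ) {m : ℕ} (hm : m + 1 < k) :
    block (Tpencil k A δ *ᵥ z) (m + 1) = pencilBlock k A δ (m + 1) m *ᵥ block z m
      + pencilBlock k A δ (m + 1) (m + 1) *ᵥ block z (m + 1)
      + pencilBlock k A δ (m + 1) (m + 2) *ᵥ block z (m + 2) := by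
  rw [block_Tpencil_mulVec A δ z hm, sum_range_eq_sum_of_support {m, m + 1, m + 2}]
  · rw [sum_insert (by simp), sum_insert (by simp), sum_singleton, add_assoc]
  · intro j hj
    rw [block_of_le z hj, mulVec_zero]
  · intro j _ hj
    simp only [mem_insert, mem_singleton, not_or] at hj
    rw [pencilBlock_of_not_adjacent A δ (by omega) (by omega) (by omega), zero_mulVec]

lemma block_Tpencil_mulVec_of_odd (z : Fin k × Fin n → ℂ) {i : ℕ} (hi : i % 2 = 1)
    (hik : i + 1 < k) :
    block (Tpencil k A δ *ᵥ z) i = δ • block z (i + 1) - block z (i - 1) := by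
  obtain ⟨m, rfl⟩ : ∃ m, i = m + 1 := ⟨i - 1, by omega⟩
  have hm : m % 2 = 0 := by omega
  rw [block_Tpencil_mulVec_succ A δ z (by omega), pencilBlock_succ_left, pencilBlock_self,
    pencilBlock_succ_right, sub_eq_neg_add]
  simp [hi, hm, smul_mulVec, neg_mulVec]

lemma block_Tpencil_mulVec_of_even (z : Fin k × Fin n → ℂ) {i : ℕ} (hi : i % 2 = 0)
    (hi₀ : 0 < i) (hik : i < k) :
    block (Tpencil k A δ *ᵥ z) i = δ • block z (i - 1)
      + (δ • A (k - i) + A (k - i - 1)) *ᵥ block z i - block z (i + 1) := by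
  obtain ⟨m, rfl⟩ : ∃ m, i = m + 1 := ⟨i - 1, by omega⟩
  have hm : m % 2 = 1 := by omega
  rw [block_Tpencil_mulVec_succ A δ z hik, pencilBlock_succ_left, pencilBlock_self,
    pencilBlock_succ_right]
  simp [hi, hm, smul_mulVec, neg_mulVec, sub_eq_add_neg]

lemma horner_zero : horner k A 0 δ = A k := by
  simp [horner]

lemma horner_succ {i : ℕ} (hi : i < k) :
    horner k A (i + 1) δ = δ • horner k A i δ + A (k - i - 1) := by
  rw [horner, sum_range_succ', horner, smul_sum]
  congr 1
  · refine sum_congr rfl fun j _ => ?_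
    rw [smul_smul, pow_succ', show k - (i + 1) + (j + 1) = k - i + j by omega]
  · rw [pow_zero, one_smul, show k - (i + 1) + 0 = k - i - 1 by omega]

lemma horner_self : horner k A k δ = Peval k A δ := by
  simp [horner, Peval]

lemma DeltaBlock_mulVec_of_even {q : ℕ} (hq : q % 2 = 0) (x : Fin n → ℂ) :
    DeltaBlock k A δ q *ᵥ x = δ ^ ((k - 1 - q) / 2) • x := by
  rw [DeltaBlock, if_pos hq, smul_mulVec, one_mulVec]

lemma DeltaBlock_mulVec_of_odd {q : ℕ} (hq : q % 2 = 1) (x : Fin n → ℂ) :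
    DeltaBlock k A δ q *ᵥ x = δ ^ ((k - q) / 2) • (horner k A q δ *ᵥ x) := by
  rw [DeltaBlock, if_neg (by omega), smul_mulVec]

lemma block_Delta_mulVec (x : Fin n → ℂ) {q : ℕ} (hq : q < k) :
    block (Delta k A δ *ᵥ x) q = DeltaBlock k A δ q *ᵥ x := by
  funext a
  simp [block, hq, Delta, mulVec, dotProduct]

lemma block_Delta_mulVec_last (hk : Odd k) (x : Fin n → ℂ) :
    block (Delta k A δ *ᵥ x) (k - 1) = x := by
  obtain ⟨r, rfl⟩ := hk
  rw [block_Delta_mulVec A δ x (by omega), DeltaBlock_mulVec_of_even A δ (by omega)]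
  simp

lemma block_Tpencil_mulVec_Delta_mulVec_of_even (hk : Odd k) (x : Fin n → ℂ) {i : ℕ}
    (hi : i % 2 = 0) (hik : i < k) :
    block (Tpencil k A δ *ᵥ (Delta k A δ *ᵥ x)) i
      = δ ^ ((k - 1 - i) / 2) • (horner k A (i + 1) δ *ᵥ x)
        - block (Delta k A δ *ᵥ x) (i + 1) := by
  have hk₂ := Nat.odd_iff.mp hk
  rcases Nat.eq_zero_or_pos i with rfl | hi₀
  · rw [block_Tpencil_mulVec_zero A δ _ hik, block_Delta_mulVec A δ x hik,
      DeltaBlock_mulVec_of_even A δ hi, horner_succ A δ hik, horner_zero]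
    simp [mulVec_smul]
  · rw [block_Tpencil_mulVec_of_even A δ _ hi hi₀ hik, block_Delta_mulVec A δ x (by omega),
      block_Delta_mulVec A δ x hik, DeltaBlock_mulVec_of_odd A δ (by omega),
      DeltaBlock_mulVec_of_even A δ hi, horner_succ A δ hik,
      show i = i - 1 + 1 by omega, horner_succ A δ (by omega), Nat.add_sub_cancel,
      show (k - (i - 1)) / 2 = (k - 1 - (i - 1 + 1)) / 2 + 1 by omega]
    simp only [add_mulVec, smul_mulVec, mulVec_smul, smul_add, smul_smul, pow_succ]
    module

lemma block_Tpencil_mulVec_Delta_mulVec (hk : Odd k) (x : Fin n → ℂ) {i : ℕ} (hik : i < k) :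
    block (Tpencil k A δ *ᵥ (Delta k A δ *ᵥ x)) i
      = if i = k - 1 then Peval k A δ *ᵥ x else 0 := by
  have hk₂ := Nat.odd_iff.mp hk
  rcases Nat.mod_two_eq_zero_or_one i with hi | hi
  · rw [block_Tpencil_mulVec_Delta_mulVec_of_even A δ hk x hi hik]
    split_ifs with hlast
    · rw [hlast, Nat.sub_add_cancel (by omega : 1 ≤ k), block_of_le _ le_rfl, horner_self]
      simp
    · rw [block_Delta_mulVec A δ x (by omega), DeltaBlock_mulVec_of_odd A δ (by omega),
        show k - 1 - i = k - (i + 1) by omega, sub_self]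
  · rw [block_Tpencil_mulVec_of_odd A δ _ hi (by omega), if_neg (by omega),
      block_Delta_mulVec A δ x (by omega), block_Delta_mulVec A δ x (by omega),
      DeltaBlock_mulVec_of_even A δ (by omega), DeltaBlock_mulVec_of_even A δ (by omega),
      show (k - 1 - (i - 1)) / 2 = (k - 1 - (i + 1)) / 2 + 1 by omega, pow_succ,
      mul_smul, smul_comm δ, sub_self]

lemma eq_zero_of_block_Tpencil_mulVec (hk : Odd k) {z : Fin k × Fin n → ℂ}
    (hlast : block z (k - 1) = 0) (hrows : ∀ i < k - 1, block (Tpencil k A δ *ᵥ z) i = 0) :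
    z = 0 := by
  -- The odd block rows say `z_{i-1} = δ z_{i+1}`, which carries `z_{k-1} = 0` down the even
  -- blocks; each even block row then gives the next odd block in terms of earlier ones.
  obtain ⟨r, rfl⟩ := hk
  have heven : ∀ i ≤ r, block z (2 * i) = 0 := by
    suffices ∀ m ≤ r, block z (2 * (r - m)) = 0 from fun i hi => by
      simpa [Nat.sub_sub_self hi] using this (r - i) (Nat.sub_le r i)
    intro m
    induction m with
    | zero => simpa using hlast
    | succ m ih =>
      intro hm
      have hrow := hrows (2 * (r - (m + 1)) + 1) (by omega)
      rwa [block_Tpencil_mulVec_of_odd A δ z (by omega) (by omega), Nat.add_sub_cancel,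
        show 2 * (r - (m + 1)) + 1 + 1 = 2 * (r - m) by omega, ih (by omega), smul_zero,
        zero_sub, neg_eq_zero] at hrow
  have hodd : ∀ j < r, block z (2 * j + 1) = 0 := by
    intro j
    induction j with
    | zero =>
      intro hr
      have hrow := hrows 0 (by omega)
      rwa [block_Tpencil_mulVec_zero A δ z (by omega), heven 0 (Nat.zero_le r),
        mulVec_zero, zero_sub, neg_eq_zero] at hrow
    | succ j ih =>
      intro hj
      have hrow := hrows (2 * (j + 1)) (by omega)
      rwa [block_Tpencil_mulVec_of_even A δ z (by omega) (by omega) (by omega),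
        show 2 * (j + 1) - 1 = 2 * j + 1 by omega, ih (by omega), heven _ (by omega), smul_zero,
        mulVec_zero, add_zero, zero_sub, neg_eq_zero] at hrow
  refine eq_zero_of_block fun j hj => ?_
  obtain ⟨i, rfl | rfl⟩ := Nat.even_or_odd' j
  · exact heven i (by omega)
  · exact hodd i (by omega)

lemma Delta_mulVec_eq_zero_iff (hk : Odd k) (x : Fin n → ℂ) :
    Delta k A δ *ᵥ x = 0 ↔ x = 0 := by
  refine ⟨fun h => ?_, fun h => by rw [h, mulVec_zero]⟩
  rw [← block_Delta_mulVec_last A δ hk x, h, block_zero]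

lemma Tpencil_mulVec_Delta_mulVec_eq_zero_iff (hk : Odd k) (x : Fin n → ℂ) :
    Tpencil k A δ *ᵥ (Delta k A δ *ᵥ x) = 0 ↔ Peval k A δ *ᵥ x = 0 := by
  have hk0 : 0 < k := hk.pos
  constructor
  · intro h
    have hlast := block_Tpencil_mulVec_Delta_mulVec A δ hk x (Nat.sub_lt hk0 one_pos)
    rwa [h, block_zero, if_pos rfl, eq_comm] at hlast
  · intro h
    refine eq_zero_of_block fun i hi => ?_
    rw [block_Tpencil_mulVec_Delta_mulVec A δ hk x hi, h, ite_self]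

theorem Tpencil_rightEigenvector_iff (hk : Odd k) (z : Fin k × Fin n → ℂ) :
    (z ≠ 0 ∧ Tpencil k A δ *ᵥ z = 0) ↔
      ∃ x : Fin n → ℂ, (x ≠ 0 ∧ Peval k A δ *ᵥ x = 0) ∧ z = Delta k A δ *ᵥ x := by
  constructor
  · rintro ⟨hz, hTz⟩
    have hzx : z = Delta k A δ *ᵥ block z (k - 1) := by
      rw [← sub_eq_zero]
      refine eq_zero_of_block_Tpencil_mulVec A δ hk ?_ fun i hi => ?_
      · rw [block_sub, block_Delta_mulVec_last A δ hk, sub_self]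
      · rw [mulVec_sub, block_sub, hTz, block_zero,
          block_Tpencil_mulVec_Delta_mulVec A δ hk _ (by omega), if_neg (by omega), sub_zero]
    refine ⟨block z (k - 1), ⟨fun hx => hz ?_, ?_⟩, hzx⟩
    · rw [hzx, hx, mulVec_zero]
    · rw [← Tpencil_mulVec_Delta_mulVec_eq_zero_iff A δ hk, ← hzx, hTz]
  · rintro ⟨x, ⟨hx, hPx⟩, rfl⟩
    exact ⟨(Delta_mulVec_eq_zero_iff A δ hk x).not.mpr hx,
      (Tpencil_mulVec_Delta_mulVec_eq_zero_iff A δ hk x).mpr hPx⟩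

lemma pencilBlock_transpose (i j : ℕ) :
    (pencilBlock k A δ i j)ᵀ = pencilBlock k (fun m => (A m)ᵀ) δ j i := by
  by_cases h₀ : j = i
  · subst h₀
    rw [pencilBlock_self, pencilBlock_self]
    split_ifs <;> simp
  by_cases h₁ : j = i + 1
  · subst h₁
    rw [pencilBlock_succ_right, pencilBlock_succ_left]
    split_ifs <;> simp
  by_cases h₂ : i = j + 1
  · subst h₂
    rw [pencilBlock_succ_left, pencilBlock_succ_right]
    split_ifs <;> simp
  rw [pencilBlock_of_not_adjacent A δ h₀ h₁ h₂,
    pencilBlock_of_not_adjacent _ δ (Ne.symm h₀) h₂ h₁, transpose_zero]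

lemma Tpencil_transpose : (Tpencil k A δ)ᵀ = Tpencil k (fun m => (A m)ᵀ) δ := by
  ext p q
  rw [transpose_apply, Tpencil_eq_of_pencilBlock, Tpencil_eq_of_pencilBlock, of_apply, of_apply,
    ← pencilBlock_transpose, transpose_apply]

lemma Peval_transpose : (Peval k A δ)ᵀ = Peval k (fun m => (A m)ᵀ) δ := by
  simp [Peval, transpose_sum]

lemma DeltaB_eq_transpose_Delta : DeltaB k A δ = (Delta k (fun m => (A m)ᵀ) δ)ᵀ := by
  ext a ⟨q, b⟩
  simp only [DeltaB, Delta, DeltaBlock, horner, transpose_apply, of_apply]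
  split_ifs <;> simp [Matrix.sum_apply, one_apply, eq_comm]

theorem Tpencil_leftEigenvector_iff (hk : Odd k) (z : Fin k × Fin n → ℂ) :
    (z ≠ 0 ∧ star z ᵥ* Tpencil k A δ = 0) ↔
      ∃ y : Fin n → ℂ, (y ≠ 0 ∧ star y ᵥ* Peval k A δ = 0) ∧ z = (DeltaB k A δ)ᴴ *ᵥ y := by
  have hΔ : ∀ y, z = (DeltaB k A δ)ᴴ *ᵥ y ↔
      star z = Delta k (fun m => (A m)ᵀ) δ *ᵥ star y := fun y => by
    rw [DeltaB_eq_transpose_Delta, mulVec_conjTranspose, vecMul_transpose, eq_star_iff_eq_star,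
      eq_comm]
  rw [← star_ne_zero, ← mulVec_transpose, Tpencil_transpose, Tpencil_rightEigenvector_iff _ δ hk,
    star_involutive.surjective.exists]
  simp only [star_ne_zero, hΔ, ← mulVec_transpose, Peval_transpose]

end

theorem stmt_6_general {n k : ℕ} (hk : Odd k) (A : ℕ → Mat n) (δ : ℂ) :
    (∀ z : Fin k × Fin n → ℂ,
      (z ≠ 0 ∧ Tpencil k A δ *ᵥ z = 0)
        ↔ ∃ x : Fin n → ℂ, (x ≠ 0 ∧ Peval k A δ *ᵥ x = 0) ∧ z = Delta k A δ *ᵥ x)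
    ∧ (∀ z : Fin k × Fin n → ℂ,
      (z ≠ 0 ∧ Matrix.vecMul (star z) (Tpencil k A δ) = 0)
        ↔ ∃ y : Fin n → ℂ, (y ≠ 0 ∧ Matrix.vecMul (star y) (Peval k A δ) = 0)
            ∧ z = (DeltaB k A δ)ᴴ *ᵥ y) :=
  ⟨Tpencil_rightEigenvector_iff A δ hk, Tpencil_leftEigenvector_iff A δ hk⟩

theorem stmt_6 {n k : ℕ} (hk : Odd k) (hk3 : 3 ≤ k) (A : ℕ → Mat n) (hAk : A k ≠ 0)
    (hreg : ∃ lam : ℂ, (Peval k A lam).det ≠ 0)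
    (δ : ℂ) (hδ : (Peval k A δ).det = 0) :
    (∀ z : Fin k × Fin n → ℂ,
      (z ≠ 0 ∧ Tpencil k A δ *ᵥ z = 0)
        ↔ ∃ x : Fin n → ℂ, (x ≠ 0 ∧ Peval k A δ *ᵥ x = 0) ∧ z = Delta k A δ *ᵥ x)
    ∧ (∀ z : Fin k × Fin n → ℂ,
      (z ≠ 0 ∧ Matrix.vecMul (star z) (Tpencil k A δ) = 0)
        ↔ ∃ y : Fin n → ℂ, (y ≠ 0 ∧ Matrix.vecMul (star y) (Peval k A δ) = 0)
            ∧ z = (DeltaB k A δ)ᴴ *ᵥ y) :=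
  stmt_6_general hk A δ

end MPoly
end
end

section
/- Let P(λ) = ∑_{i=0}^{k} A_i λ^i be an n×n complex matrix polynomial of odd degree k ≥ 3 and write 𝒯_P(λ) = λ𝒯₁ − 𝒯₀. Then ‖𝒯₁‖₂ ≤ 2 · max_{i=0,…,k} max{1, ‖A_i‖₂} and ‖𝒯₀‖₂ ≤ 2 · max_{i=0,…,k} max{1, ‖A_i‖₂}. -/
open Finset Matrix

noncomputable section
open scoped Matrix.Norms.L2Operator

namespace Matrix

variable {𝕜 : Type*} [RCLike 𝕜] {m n : Type*} [Fintype m] [Fintype n] [DecidableEq n]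

lemma sum_norm_mulVec_sq_le (A : Matrix m n 𝕜) (x : n → 𝕜) :
    ∑ i, ‖(A *ᵥ x) i‖ ^ 2 ≤ ‖A‖ ^ 2 * ∑ j, ‖x j‖ ^ 2 := by
  have h := pow_le_pow_left₀ (norm_nonneg _) (A.l2_opNorm_mulVec (WithLp.toLp 2 x)) 2
  rw [mul_pow, EuclideanSpace.norm_sq_eq, EuclideanSpace.norm_sq_eq] at h
  simpa using h

lemma l2_opNorm_le_of_sum_norm_mulVec_sq_le {A : Matrix m n 𝕜} {c : ℝ} (hc : 0 ≤ c)
    (h : ∀ x : n → 𝕜, ∑ i, ‖(A *ᵥ x) i‖ ^ 2 ≤ c ^ 2 * ∑ j, ‖x j‖ ^ 2) : ‖A‖ ≤ c := by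
  rw [l2_opNorm_def]
  refine ContinuousLinearMap.opNorm_le_bound _ hc fun x => ?_
  refine (sq_le_sq₀ (norm_nonneg _) (by positivity)).mp ?_
  simpa [mul_pow, EuclideanSpace.norm_sq_eq] using h x

lemma l2_opNorm_one_le : ‖(1 : Matrix n n 𝕜)‖ ≤ 1 := by
  rw [← l2_opNorm_toEuclideanCLM, map_one]
  exact ContinuousLinearMap.norm_id_le

variable {κ κ' : Type*} [Fintype κ] [Fintype κ'] [DecidableEq κ']

lemma l2_opNorm_comp_le_of_monomial (B : Matrix κ κ' (Matrix m n 𝕜)) {τ : κ → κ'}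
    (hτ : Function.Injective τ) (hB : ∀ i j, j ≠ τ i → B i j = 0) {c : ℝ} (hc : 0 ≤ c)
    (hBc : ∀ i, ‖B i (τ i)‖ ≤ c) :
    ‖comp κ κ' m n 𝕜 B‖ ≤ c := by
  refine l2_opNorm_le_of_sum_norm_mulVec_sq_le hc fun x => ?_
  have hrow : ∀ i a,
      (comp κ κ' m n 𝕜 B *ᵥ x) (i, a) = (B i (τ i) *ᵥ fun b => x (τ i, b)) a := by
    intro i a
    simp only [mulVec, dotProduct, comp_apply, Fintype.sum_prod_type]
    rw [Finset.sum_eq_single (τ i) (fun j _ hj => by simp [hB i j hj]) (by simp)]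
  calc ∑ p, ‖(comp κ κ' m n 𝕜 B *ᵥ x) p‖ ^ 2
      = ∑ i, ∑ a, ‖(B i (τ i) *ᵥ fun b => x (τ i, b)) a‖ ^ 2 := by
        simp only [Fintype.sum_prod_type, hrow]
    _ ≤ ∑ i, c ^ 2 * ∑ b, ‖x (τ i, b)‖ ^ 2 := by
        gcongr with i
        exact (sum_norm_mulVec_sq_le _ _).trans (by gcongr; exact hBc i)
    _ = ∑ j ∈ Finset.univ.map ⟨τ, hτ⟩, c ^ 2 * ∑ b, ‖x (j, b)‖ ^ 2 := by
        rw [Finset.sum_map]; rfl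
    _ ≤ ∑ j, c ^ 2 * ∑ b, ‖x (j, b)‖ ^ 2 :=
        Finset.sum_le_univ_sum_of_nonneg fun j => by positivity
    _ = c ^ 2 * ∑ q, ‖x q‖ ^ 2 := by rw [Fintype.sum_prod_type, Finset.mul_sum]

lemma l2_opNorm_comp_diagonal_add_le [DecidableEq κ] (d : κ → Matrix m n 𝕜)
    (O : Matrix κ κ (Matrix m n 𝕜)) {τ : κ → κ} (hτ : Function.Injective τ)
    (hO : ∀ i j, j ≠ τ i → O i j = 0) {c c' : ℝ} (hc : 0 ≤ c) (hd : ∀ i, ‖d i‖ ≤ c)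
    (hc' : 0 ≤ c') (hOc : ∀ i, ‖O i (τ i)‖ ≤ c') :
    ‖comp κ κ m n 𝕜 (diagonal d + O)‖ ≤ c + c' := by
  rw [← compAddEquiv_apply, map_add, compAddEquiv_apply, compAddEquiv_apply]
  refine (norm_add_le _ _).trans (add_le_add ?_ (l2_opNorm_comp_le_of_monomial O hτ hO hc' hOc))
  exact l2_opNorm_comp_le_of_monomial _ Function.injective_id
    (fun i j hij => diagonal_apply_ne _ (Ne.symm hij)) hc (by simpa using hd)

end Matrix

namespace MPoly

def pairSwap (k r : ℕ) (i : Fin k) : Fin k :=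
  if h : i.1 % 2 = r ∧ i.1 + 1 < k then ⟨i.1 + 1, h.2⟩
  else if i.1 % 2 ≠ r ∧ 0 < i.1 then ⟨i.1 - 1, by omega⟩ else i

lemma val_pairSwap {k r : ℕ} (i : Fin k) :
    (pairSwap k r i).1 =
      if i.1 % 2 = r ∧ i.1 + 1 < k then i.1 + 1
      else if i.1 % 2 ≠ r ∧ 0 < i.1 then i.1 - 1 else i.1 := by
  unfold pairSwap
  split_ifs <;> rfl

lemma pairSwap_involutive {k r : ℕ} (hr : r < 2) : Function.Involutive (pairSwap k r) := by
  intro i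
  apply Fin.ext
  rw [val_pairSwap, val_pairSwap]
  split_ifs <;> omega

/-- The off-diagonal part of `𝒯₁` (`r = 1`) and of `𝒯₀` (`r = 0`). -/
def pairBlocks (n k r : ℕ) : Matrix (Fin k) (Fin k) (Mat n) :=
  of fun i j => if (j.1 = i.1 + 1 ∧ i.1 % 2 = r) ∨ (i.1 = j.1 + 1 ∧ j.1 % 2 = r) then 1 else 0

variable {n : ℕ}

lemma pairBlocks_eq_zero_of_ne_pairSwap {k r : ℕ} {i j : Fin k} (hj : j ≠ pairSwap k r i) :
    pairBlocks n k r i j = 0 := by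
  refine if_neg fun h => hj (Fin.ext ?_)
  rw [val_pairSwap]
  split_ifs <;> omega

lemma l2_opNorm_comp_diagonal_add_pairBlocks_le {k r : ℕ} (hr : r < 2) (d : Fin k → Mat n)
    {c : ℝ} (hc : 0 ≤ c) (hd : ∀ i, ‖d i‖ ≤ c) :
    ‖comp _ _ _ _ ℂ (diagonal d + pairBlocks n k r)‖ ≤ c + 1 := by
  refine l2_opNorm_comp_diagonal_add_le _ _ (pairSwap_involutive hr).injective
    (fun _ _ => pairBlocks_eq_zero_of_ne_pairSwap) hc hd zero_le_one fun i => ?_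
  rw [pairBlocks, of_apply]
  split_ifs
  · exact l2_opNorm_one_le
  · simp

lemma T1Block_matrix_eq (k : ℕ) (A : ℕ → Mat n) :
    (of fun i j : Fin k => T1Block k A i j) =
      diagonal (fun i : Fin k => if i.1 % 2 = 0 then A (k - i) else 0) + pairBlocks n k 1 := by
  ext1 i j
  simp only [of_apply, Matrix.add_apply, diagonal_apply, T1Block, pairBlocks, Fin.ext_iff]
  split_ifs <;> first | omega | simp

lemma T0Block_matrix_eq (k : ℕ) (A : ℕ → Mat n) :
    (of fun i j : Fin k => T0Block k A i j) =
      diagonal (fun i : Fin k => if i.1 % 2 = 0 then -A (k - i - 1) else 0) +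
        pairBlocks n k 0 := by
  ext1 i j
  simp only [of_apply, Matrix.add_apply, diagonal_apply, T0Block, pairBlocks, Fin.ext_iff]
  split_ifs <;> first | omega | simp

lemma specNorm_eq_l2_opNorm {ι κ : Type*} [Fintype ι] [Fintype κ] [DecidableEq κ]
    (M : Matrix ι κ ℂ) : specNorm M = ‖M‖ :=
  rfl

lemma one_le_maxA1 (k : ℕ) (A : ℕ → Mat n) : 1 ≤ maxA1 k A :=
  (le_max_left _ _).trans (Finset.le_sup' (fun i => max 1 (specNorm (A i))) (self_mem_range_succ k))

lemma norm_le_maxA1 {k i : ℕ} (A : ℕ → Mat n) (hi : i ≤ k) : ‖A i‖ ≤ maxA1 k A :=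
  (le_max_right _ _).trans
    (Finset.le_sup' (fun i => max 1 (specNorm (A i))) (mem_range_succ_iff.mpr hi))

lemma specNorm_TT1_le (k : ℕ) (A : ℕ → Mat n) : specNorm (TT1 k A) ≤ maxA1 k A + 1 := by
  rw [specNorm_eq_l2_opNorm]
  change ‖comp _ _ _ _ ℂ (of fun i j : Fin k => T1Block k A i j)‖ ≤ _
  rw [T1Block_matrix_eq]
  refine l2_opNorm_comp_diagonal_add_pairBlocks_le one_lt_two _
    (zero_le_one.trans (one_le_maxA1 k A)) fun i => ?_
  split_ifs
  · exact norm_le_maxA1 A (Nat.sub_le k i)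
  · simpa using zero_le_one.trans (one_le_maxA1 k A)

lemma specNorm_TT0_le (k : ℕ) (A : ℕ → Mat n) : specNorm (TT0 k A) ≤ maxA1 k A + 1 := by
  rw [specNorm_eq_l2_opNorm]
  change ‖comp _ _ _ _ ℂ (of fun i j : Fin k => T0Block k A i j)‖ ≤ _
  rw [T0Block_matrix_eq]
  refine l2_opNorm_comp_diagonal_add_pairBlocks_le zero_lt_two _
    (zero_le_one.trans (one_le_maxA1 k A)) fun i => ?_
  split_ifs
  · simpa using norm_le_maxA1 A (by omega : k - i - 1 ≤ k)
  · simpa using zero_le_one.trans (one_le_maxA1 k A)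

theorem stmt_10_general {n k : ℕ} (A : ℕ → Mat n) :
    specNorm (TT1 k A) ≤ 2 * maxA1 k A ∧ specNorm (TT0 k A) ≤ 2 * maxA1 k A := by
  have h := one_le_maxA1 k A
  exact ⟨(specNorm_TT1_le k A).trans (by linarith), (specNorm_TT0_le k A).trans (by linarith)⟩

theorem stmt_10 {n k : ℕ} (hk : Odd k) (hk3 : 3 ≤ k) (A : ℕ → Mat n) (hAk : A k ≠ 0) :
    specNorm (TT1 k A) ≤ 2 * maxA1 k A ∧ specNorm (TT0 k A) ≤ 2 * maxA1 k A :=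
  stmt_10_general A

end MPoly
end
end

section
/- Let P(λ) = ∑_{i=0}^{k} A_i λ^i be an n×n complex matrix polynomial of odd degree k ≥ 3 with A_0 ≠ 0, and let δ ∈ ℂ be nonzero. Write 𝒯_P(λ) = λ𝒯₁ − 𝒯₀ and 𝒯_{rev P}(λ) = λ𝒯̃₁ − 𝒯̃₀. Let x, y ∈ ℂ^{kn} be nonzero with 𝒯_P(δ)x = 0 and y*𝒯_P(δ) = 0, and assume y*𝒯₁x ≠ 0. Then (|δ| ‖𝒯₁‖₂ + ‖𝒯₀‖₂) ‖y‖₂ ‖x‖₂ / (|δ| · |y*𝒯₁x|) = (|1/δ| ‖𝒯̃₁‖₂ + ‖𝒯̃₀‖₂) ‖R D y‖₂ ‖R D x‖₂ / (|1/δ| · |(R D y)* 𝒯̃₁ (R D x)|); that is, the condition number of δ as an eigenvalue of 𝒯_P equals the condition number of 1/δ as an eigenvalue of 𝒯_{rev P}. -/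
open Finset Matrix

noncomputable section
namespace MPoly

variable {n : ℕ}

/-!
Let `Q = R D`; it is unitary, being a block permutation matrix times a diagonal sign matrix.
Because `k` is odd, the blocks of the pencil of `rev P` are those of `𝒯_P` read in reverse
order with the roles of `𝒯₁` and `𝒯₀` exchanged, up to signs `(-1)^(i+j)`; that is,
`𝒯̃₁ = -Q 𝒯₀ Q*` and `𝒯̃₀ = -Q 𝒯₁ Q*`. The condition number is unchanged by a global sign
and by a unitary congruence of the pencil (moving `x, y` to `Q x, Q y`), so the right-hand side
is the condition number of `δ⁻¹` for the swapped pencil `λ𝒯₀ - 𝒯₁` at `x, y`. As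
`y* 𝒯₀ x = δ y* 𝒯₁ x`, this equals the condition number of `δ` for `λ𝒯₁ - 𝒯₀`.
-/

open scoped Matrix.Norms.L2Operator

section

variable {ι : Type*} [Fintype ι]

lemma vecNorm_eq_norm (v : ι → ℂ) : vecNorm v = ‖WithLp.toLp 2 v‖ :=
  (EuclideanSpace.norm_eq _).symm

lemma dotProduct_mulVec_of_vecMul_pencil_eq_zero {L₁ L₀ : Matrix ι ι ℂ} {δ : ℂ} {y : ι → ℂ}
    (hy : star y ᵥ* (δ • L₁ - L₀) = 0) (x : ι → ℂ) :
    star y ⬝ᵥ (L₀ *ᵥ x) = δ * (star y ⬝ᵥ (L₁ *ᵥ x)) := by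
  have h := congrArg (· ⬝ᵥ x) hy
  simp only [← dotProduct_mulVec, sub_mulVec, smul_mulVec, dotProduct_sub, dotProduct_smul,
    smul_eq_mul, zero_dotProduct, sub_eq_zero] at h
  exact h.symm

variable [DecidableEq ι]

lemma specNorm_eq_norm (M : Matrix ι ι ℂ) : specNorm M = ‖M‖ := rfl

lemma specNorm_neg (M : Matrix ι ι ℂ) : specNorm (-M) = specNorm M := norm_neg M

lemma specNorm_unitary_conj {U : Matrix ι ι ℂ} (hU : U ∈ unitaryGroup ι ℂ) (M : Matrix ι ι ℂ) :
    specNorm (U * M * star U) = specNorm M := by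
  rw [specNorm_eq_norm, specNorm_eq_norm, CStarRing.norm_mul_mem_unitary _ (Unitary.star_mem hU),
    CStarRing.norm_mem_unitary_mul _ hU]

lemma vecNorm_unitary_mulVec {U : Matrix ι ι ℂ} (hU : U ∈ unitaryGroup ι ℂ) (v : ι → ℂ) :
    vecNorm (U *ᵥ v) = vecNorm v := by
  rw [vecNorm_eq_norm, vecNorm_eq_norm, ← toEuclideanCLM_toLp]
  exact ContinuousLinearMap.norm_map_of_mem_unitary (Unitary.map_mem _ hU) _

lemma star_mulVec_dotProduct_unitary_conj {U : Matrix ι ι ℂ} (hU : U ∈ unitaryGroup ι ℂ)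
    (M : Matrix ι ι ℂ) (x y : ι → ℂ) :
    star (U *ᵥ y) ⬝ᵥ ((U * M * star U) *ᵥ (U *ᵥ x)) = star y ⬝ᵥ (M *ᵥ x) := by
  have hUU : star U * U = 1 := (mem_unitaryGroup_iff').mp hU
  have hM : star U * (U * M * star U * U) = M := by
    rw [show star U * (U * M * star U * U) = star U * U * M * (star U * U) by
      simp only [Matrix.mul_assoc], hUU, Matrix.one_mul, Matrix.mul_one]
  rw [star_mulVec, mulVec_mulVec, ← dotProduct_mulVec, mulVec_mulVec, ← star_eq_conjTranspose, hM]

lemma permMatrix_mem_unitaryGroup (σ : Equiv.Perm ι) : σ.permMatrix ℂ ∈ unitaryGroup ι ℂ := by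
  rw [mem_unitaryGroup_iff', star_eq_conjTranspose, conjTranspose_permMatrix, ← permMatrix_mul,
    mul_inv_cancel, permMatrix_one]

def pencilCondNum (L₁ L₀ : Matrix ι ι ℂ) (δ : ℂ) (x y : ι → ℂ) : ℝ :=
  (‖δ‖ * specNorm L₁ + specNorm L₀) * vecNorm y * vecNorm x / (‖δ‖ * ‖star y ⬝ᵥ (L₁ *ᵥ x)‖)

lemma pencilCondNum_neg (L₁ L₀ : Matrix ι ι ℂ) (δ : ℂ) (x y : ι → ℂ) :
    pencilCondNum (-L₁) (-L₀) δ x y = pencilCondNum L₁ L₀ δ x y := by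
  simp only [pencilCondNum, specNorm_neg, neg_mulVec, dotProduct_neg, norm_neg]

lemma pencilCondNum_unitary_conj {U : Matrix ι ι ℂ} (hU : U ∈ unitaryGroup ι ℂ)
    (L₁ L₀ : Matrix ι ι ℂ) (δ : ℂ) (x y : ι → ℂ) :
    pencilCondNum (U * L₁ * star U) (U * L₀ * star U) δ (U *ᵥ x) (U *ᵥ y)
      = pencilCondNum L₁ L₀ δ x y := by
  simp only [pencilCondNum, specNorm_unitary_conj hU, vecNorm_unitary_mulVec hU,
    star_mulVec_dotProduct_unitary_conj hU]

lemma pencilCondNum_swap_inv {L₁ L₀ : Matrix ι ι ℂ} {δ : ℂ} {x y : ι → ℂ}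
    (h : star y ⬝ᵥ (L₀ *ᵥ x) = δ * (star y ⬝ᵥ (L₁ *ᵥ x))) :
    pencilCondNum L₀ L₁ δ⁻¹ x y = pencilCondNum L₁ L₀ δ x y := by
  rcases eq_or_ne δ 0 with rfl | hδ
  · -- both sides divide by `‖0‖ = 0`
    simp [pencilCondNum]
  have hδ' : ‖δ‖ ≠ 0 := norm_ne_zero_iff.mpr hδ
  unfold pencilCondNum
  rw [h, norm_mul, norm_inv]
  field_simp
  ring

end

section

variable {k : ℕ}

def blockRevPerm (k n : ℕ) : Equiv.Perm (Fin k × Fin n) :=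
  Fin.revPerm.prodCongr (Equiv.refl (Fin n))

@[simp]
lemma blockRevPerm_apply (p : Fin k × Fin n) : blockRevPerm k n p = (p.1.rev, p.2) := rfl

lemma Rmat_eq_permMatrix : Rmat k n = (blockRevPerm k n).permMatrix ℂ := by
  ext p q
  have hp := p.1.isLt
  simp only [Rmat, of_apply, PEquiv.toMatrix_apply, Equiv.toPEquiv_apply, Option.mem_def,
    Option.some.injEq, blockRevPerm_apply, Prod.ext_iff, Fin.ext_iff, Fin.val_rev]
  split_ifs <;> first | rfl | omega

lemma Dmat_eq_diagonal : Dmat k n = diagonal fun p => (-1 : ℂ) ^ p.1.1 := by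
  ext p q
  simp [Dmat, diagonal_apply]

lemma Dmat_mem_unitaryGroup : Dmat k n ∈ unitaryGroup (Fin k × Fin n) ℂ := by
  rw [mem_unitaryGroup_iff', Dmat_eq_diagonal, star_eq_conjTranspose, diagonal_conjTranspose,
    diagonal_mul_diagonal, ← diagonal_one]
  congr 1
  ext p
  simp [← mul_pow]

lemma Rmat_mul_Dmat_mem_unitaryGroup : Rmat k n * Dmat k n ∈ unitaryGroup (Fin k × Fin n) ℂ :=
  mul_mem (Rmat_eq_permMatrix ▸ permMatrix_mem_unitaryGroup _) Dmat_mem_unitaryGroup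

lemma Rmat_mul_Dmat_conj_apply (X : Matrix (Fin k × Fin n) (Fin k × Fin n) ℂ)
    (p q : Fin k × Fin n) :
    (Rmat k n * Dmat k n * X * star (Rmat k n * Dmat k n)) p q
      = (-1) ^ (p.1.rev.1 + q.1.rev.1) * X (p.1.rev, p.2) (q.1.rev, q.2) := by
  set P := (blockRevPerm k n).permMatrix ℂ
  set D := diagonal fun p : Fin k × Fin n => (-1 : ℂ) ^ p.1.1
  have hconj : P * D * X * star (P * D)
      = P * (D * X * star D) * (blockRevPerm k n)⁻¹.permMatrix ℂ := by
    rw [star_mul, star_eq_conjTranspose P, conjTranspose_permMatrix]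
    simp only [Matrix.mul_assoc]
  rw [Rmat_eq_permMatrix, Dmat_eq_diagonal, hconj, PEquiv.toMatrix_toPEquiv_mul,
    PEquiv.mul_toMatrix_toPEquiv]
  simp [D, star_eq_conjTranspose, diagonal_conjTranspose, diagonal_mul, mul_diagonal,
    Equiv.Perm.inv_def, pow_add]
  ring

lemma T1Block_rev (hk : Odd k) (A : ℕ → Mat n) {i j : ℕ} (hi : i < k) (hj : j < k) :
    T1Block k (fun m => A (k - m)) i j =
      -((-1 : ℂ) ^ (k - (i + 1) + (k - (j + 1))) • T0Block k A (k - (i + 1)) (k - (j + 1))) := by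
  obtain ⟨m, rfl⟩ := hk
  unfold T1Block T0Block
  simp only [neg_one_pow_eq_ite, Nat.even_iff]
  split_ifs <;> (try simp) <;> first | omega | (congr 1; omega)

lemma T0Block_rev (hk : Odd k) (A : ℕ → Mat n) {i j : ℕ} (hi : i < k) (hj : j < k) :
    T0Block k (fun m => A (k - m)) i j =
      -((-1 : ℂ) ^ (k - (i + 1) + (k - (j + 1))) • T1Block k A (k - (i + 1)) (k - (j + 1))) := by
  obtain ⟨m, rfl⟩ := hk
  unfold T1Block T0Block
  simp only [neg_one_pow_eq_ite, Nat.even_iff]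
  split_ifs <;> (try simp) <;> first | omega | (congr 1; omega)

lemma TT1_rev (hk : Odd k) (A : ℕ → Mat n) :
    TT1 k (fun i => A (k - i))
      = -(Rmat k n * Dmat k n * TT0 k A * star (Rmat k n * Dmat k n)) := by
  ext p q
  rw [Matrix.neg_apply, Rmat_mul_Dmat_conj_apply]
  simp only [TT1, TT0, of_apply, T1Block_rev hk A p.1.isLt q.1.isLt, Fin.val_rev,
    Matrix.neg_apply, Matrix.smul_apply, smul_eq_mul]

lemma TT0_rev (hk : Odd k) (A : ℕ → Mat n) :
    TT0 k (fun i => A (k - i))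
      = -(Rmat k n * Dmat k n * TT1 k A * star (Rmat k n * Dmat k n)) := by
  ext p q
  rw [Matrix.neg_apply, Rmat_mul_Dmat_conj_apply]
  simp only [TT1, TT0, of_apply, T0Block_rev hk A p.1.isLt q.1.isLt, Fin.val_rev,
    Matrix.neg_apply, Matrix.smul_apply, smul_eq_mul]

end

theorem stmt_14_general {n k : ℕ} (hk : Odd k) (A : ℕ → Mat n)
    (δ : ℂ) (x y : Fin k × Fin n → ℂ)
    (hy : Matrix.vecMul (star y) (Tpencil k A δ) = 0) :
    (‖δ‖ * specNorm (TT1 k A) + specNorm (TT0 k A)) * vecNorm y * vecNorm x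
        / (‖δ‖ * ‖star y ⬝ᵥ (TT1 k A *ᵥ x)‖)
      = (‖δ⁻¹‖ * specNorm (TT1 k (fun i => A (k - i)))
            + specNorm (TT0 k (fun i => A (k - i))))
            * vecNorm ((Rmat k n * Dmat k n) *ᵥ y) * vecNorm ((Rmat k n * Dmat k n) *ᵥ x)
          / (‖δ⁻¹‖
              * ‖star ((Rmat k n * Dmat k n) *ᵥ y)
                  ⬝ᵥ (TT1 k (fun i => A (k - i)) *ᵥ ((Rmat k n * Dmat k n) *ᵥ x))‖) := by
  change pencilCondNum (TT1 k A) (TT0 k A) δ x y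
    = pencilCondNum (TT1 k (fun i => A (k - i))) (TT0 k (fun i => A (k - i))) δ⁻¹
        ((Rmat k n * Dmat k n) *ᵥ x) ((Rmat k n * Dmat k n) *ᵥ y)
  rw [TT1_rev hk, TT0_rev hk, pencilCondNum_neg,
    pencilCondNum_unitary_conj Rmat_mul_Dmat_mem_unitaryGroup,
    pencilCondNum_swap_inv (dotProduct_mulVec_of_vecMul_pencil_eq_zero hy x)]

theorem stmt_14 {n k : ℕ} (hk : Odd k) (hk3 : 3 ≤ k) (A : ℕ → Mat n)
    (hAk : A k ≠ 0) (hA0 : A 0 ≠ 0)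
    (δ : ℂ) (hδ : δ ≠ 0) (x y : Fin k × Fin n → ℂ) (hx0 : x ≠ 0) (hy0 : y ≠ 0)
    (hx : Tpencil k A δ *ᵥ x = 0) (hy : Matrix.vecMul (star y) (Tpencil k A δ) = 0)
    (hd : star y ⬝ᵥ (TT1 k A *ᵥ x) ≠ 0) :
    (‖δ‖ * specNorm (TT1 k A) + specNorm (TT0 k A)) * vecNorm y * vecNorm x
        / (‖δ‖ * ‖star y ⬝ᵥ (TT1 k A *ᵥ x)‖)
      = (‖δ⁻¹‖ * specNorm (TT1 k (fun i => A (k - i)))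
            + specNorm (TT0 k (fun i => A (k - i))))
            * vecNorm ((Rmat k n * Dmat k n) *ᵥ y) * vecNorm ((Rmat k n * Dmat k n) *ᵥ x)
          / (‖δ⁻¹‖
              * ‖star ((Rmat k n * Dmat k n) *ᵥ y)
                  ⬝ᵥ (TT1 k (fun i => A (k - i)) *ᵥ ((Rmat k n * Dmat k n) *ᵥ x))‖) :=
  stmt_14_general hk A δ x y hy

end MPoly
end
end
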